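/- Let G = (N, E) be a finite simple connected graph with m edges and let e = (i,j) and ê = (w,z) be two distinct edges lying in a common cell of G, i.e., some cycle of G contains both e and ê (in particular e is not a bridge, so G − e is connected). Let B ∈ ℝ^E and let μ be a probability measure on ℝ^E ≅ ℝ^m that is absolutely continuous with respect to the Lebesgue measure and such that μ-almost surely B_a + ω_a > 0 for every a ∈ E. Then μ( { ω : K_{eê}(B + ω) ≠ 0 } ) = 1, where K_{eê}(B̃) is the line outage distribution factor computed with susceptances B̃ = B + ω. -/

import Mathlib

/-!
The numerator of `K_{eê}(B + ω)` is a polynomial in `ω`, and it is not the zero polynomial.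
Indeed, the cycle through `e` and `ê`, with `e` removed, is a path of `G - e` from `j` to `i`
through `ê`; extend it to a spanning tree of `G - e` and delete `ê`. The result is a two-tree
forest separating `i` from `j` and `w` from `z`, so one of the disjoint families
`T({i,w},{j,z})`, `T({i,z},{j,w})` is nonempty. For an inclusion-minimal member `F₀` of their
union, the susceptances `B + ω = 1_{F₀}` give `χ(F) = [F = F₀]` on both families, so the
numerator is `±1` there.

The zero set of a nonzero real polynomial is Lebesgue-null (by induction on the number of
variables: as a polynomial in one variable, its leading coefficient is almost surely nonzero,
and then it has finitely many roots), hence `μ`-null. Away from it, and wherever `B + ω > 0`,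
the factor `B_ê` and the spanning-tree sum in the denominator are positive.
-/

open Finset

variable {V : Type*} [Fintype V] [DecidableEq V]

/-- `F` is the edge set of a spanning forest of `G` consisting of exactly two
vertex-disjoint trees that together cover all vertices of `G`, one tree containing
every vertex of `N₁` and the other containing every vertex of `N₂`. -/
def IsTwoTreeForest (G : SimpleGraph V) (N₁ N₂ : Set V) (F : Finset (Sym2 V)) : Prop :=
  ↑F ⊆ G.edgeSet ∧
    (SimpleGraph.fromEdgeSet (↑F : Set (Sym2 V))).IsAcyclic ∧
    ∃ u v : V,
      ¬(SimpleGraph.fromEdgeSet (↑F : Set (Sym2 V))).Reachable u v ∧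
      (∀ x : V, (SimpleGraph.fromEdgeSet (↑F : Set (Sym2 V))).Reachable x u ∨
        (SimpleGraph.fromEdgeSet (↑F : Set (Sym2 V))).Reachable x v) ∧
      (∀ x ∈ N₁, (SimpleGraph.fromEdgeSet (↑F : Set (Sym2 V))).Reachable x u) ∧
      (∀ x ∈ N₂, (SimpleGraph.fromEdgeSet (↑F : Set (Sym2 V))).Reachable x v)

/-- The set `T(N₁, N₂)` of spanning forests of `G` consisting of exactly two trees,
one containing `N₁` and the other containing `N₂`, identified with their edge sets. -/
noncomputable def twoForests (G : SimpleGraph V) (N₁ N₂ : Set V) :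
    Finset (Finset (Sym2 V)) :=
  letI := Classical.decPred (IsTwoTreeForest G N₁ N₂)
  Finset.univ.filter (IsTwoTreeForest G N₁ N₂)

/-- `F` is the edge set of a spanning tree of `G`. -/
def IsSpanningTreeEdgeSet (G : SimpleGraph V) (F : Finset (Sym2 V)) : Prop :=
  ↑F ⊆ G.edgeSet ∧ (SimpleGraph.fromEdgeSet (↑F : Set (Sym2 V))).IsTree

/-- The set of (edge sets of) spanning trees of `G`. -/
noncomputable def spanningTrees (G : SimpleGraph V) : Finset (Finset (Sym2 V)) :=
  letI := Classical.decPred (IsSpanningTreeEdgeSet G)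
  Finset.univ.filter (IsSpanningTreeEdgeSet G)

/-- The weight `χ(F)` of an edge set `F`: the product of the susceptances of its edges. -/
def chi (B : Sym2 V → ℝ) (F : Finset (Sym2 V)) : ℝ := ∏ a ∈ F, B a

/-- The line outage distribution factor `K_{e ê}` for the edges `e = (i, j)` and
`ê = (w, z)` of `G`, with susceptances `B`:
`K_{e ê} = B_ê · (Σ_{F ∈ T({i,w},{j,z})} χ(F) − Σ_{F ∈ T({i,z},{j,w})} χ(F)) /
(Σ_{T spanning tree of G − e} χ(T))`. -/
noncomputable def lodf (G : SimpleGraph V) (B : Sym2 V → ℝ) (i j w z : V) : ℝ :=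
  B s(w, z) *
    ((∑ F ∈ twoForests G {i, w} {j, z}, chi B F) -
      ∑ F ∈ twoForests G {i, z} {j, w}, chi B F) /
    ∑ F ∈ spanningTrees (G.deleteEdges {s(i, j)}), chi B F

/-- The susceptances `B + ω`, where the perturbation `ω` is indexed by the edges of `G`. -/
noncomputable def perturb (G : SimpleGraph V) (B : Sym2 V → ℝ) (ω : ↥G.edgeSet → ℝ) :
    Sym2 V → ℝ := fun a =>
  letI := Classical.dec (a ∈ G.edgeSet)
  B a + if h : a ∈ G.edgeSet then ω ⟨a, h⟩ else 0

namespace MvPolynomial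

open MeasureTheory

theorem measurableSet_setOf_eval_ne_zero {σ : Type*} [Countable σ] (p : MvPolynomial σ ℝ) :
    MeasurableSet {x : σ → ℝ | eval x p ≠ 0} :=
  (isOpen_ne_fun p.continuous_eval continuous_const).measurableSet

theorem ae_eval_ne_zero_fin :
    ∀ {n : ℕ} {p : MvPolynomial (Fin n) ℝ}, p ≠ 0 → ∀ᵐ x ∂volume, eval x p ≠ 0
  | 0, p, hp => by
    rw [p.eq_C_of_isEmpty, Ne, C_eq_zero] at hp
    exact Filter.Eventually.of_forall fun x => by rwa [p.eq_C_of_isEmpty, eval_C]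
  | n + 1, p, hp => by
    set q := finSuccEquiv ℝ n p
    have hq : q ≠ 0 := (map_ne_zero_iff _ (finSuccEquiv ℝ n).injective).mpr hp
    have hslice : ∀ᵐ s : Fin n → ℝ, ∀ᵐ y : ℝ, eval (Fin.cons y s) p ≠ 0 := by
      filter_upwards [ae_eval_ne_zero_fin (Polynomial.leadingCoeff_ne_zero.mpr hq)] with s hs
      have hqs : q.map (eval s) ≠ 0 := fun h => hs <| by
        rw [Polynomial.leadingCoeff, ← Polynomial.coeff_map, h, Polynomial.coeff_zero]
      simp_rw [eval_eq_eval_mv_eval']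
      exact measure_mono_null (fun y hy => by simpa using hy)
        ((Polynomial.finite_setOfPred_isRoot hqs).measure_zero volume)
    have hmeas : MeasurableSet {z : ℝ × (Fin n → ℝ) | eval (Fin.cons z.1 z.2) p ≠ 0} :=
      (measurableSet_setOf_eval_ne_zero p).preimage (by fun_prop)
    have hprod : ∀ᵐ z : ℝ × (Fin n → ℝ), eval (Fin.cons z.1 z.2) p ≠ 0 := by
      rw [Measure.volume_eq_prod, Measure.ae_prod_iff_ae_ae hmeas]
      exact (Measure.ae_ae_comm hmeas).mpr hslice
    simpa using (volume_preserving_piFinSuccAbove (fun _ => ℝ) 0).quasiMeasurePreserving.ae hprod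

theorem ae_eval_ne_zero {σ : Type*} [Fintype σ] {p : MvPolynomial σ ℝ} (hp : p ≠ 0) :
    ∀ᵐ x ∂volume, eval x p ≠ 0 := by
  set e := Fintype.equivFin σ
  have hp' : rename e p ≠ 0 := (map_ne_zero_iff _ (rename_injective e e.injective)).mpr hp
  have hfin := (volume_measurePreserving_piCongrLeft (fun _ => ℝ) e).quasiMeasurePreserving.ae
    (ae_eval_ne_zero_fin hp')
  have hcomp : ∀ x : σ → ℝ, MeasurableEquiv.piCongrLeft (fun _ => ℝ) e x ∘ e = x := by
    intro x; ext a
    simp [MeasurableEquiv.coe_piCongrLeft, Equiv.piCongrLeft_apply_apply]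
  simpa [eval_rename, hcomp] using hfin

end MvPolynomial

namespace SimpleGraph

variable {α : Type*} {G : SimpleGraph α}

theorem Walk.IsCycle.exists_isPath_of_mem_edges {x u v : α} {c : G.Walk x x} (hc : c.IsCycle)
    (he : s(u, v) ∈ c.edges) :
    ∃ p : G.Walk v u, p.IsPath ∧ s(u, v) ∉ p.edges ∧
      ∀ f ∈ c.edges, f ≠ s(u, v) → f ∈ p.edges := by
  classical
  suffices of_snd : ∀ {v} {d : G.Walk u u}, d.IsCycle → v = d.snd →
      ∃ p : G.Walk v u, p.IsPath ∧ s(u, v) ∉ p.edges ∧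
        ∀ f ∈ d.edges, f ≠ s(u, v) → f ∈ p.edges by
    have hu : u ∈ c.support := c.fst_mem_support_of_mem_edges he
    have hrot := c.rotate_edges u hu
    set d := c.rotate u hu
    have hd : d.IsCycle := hc.rotate hu
    have hv : v ∈ d.toSubgraph.neighborSet u :=
      Walk.adj_toSubgraph_iff_mem_edges.mpr (hrot.mem_iff.mpr he)
    rw [hd.neighborSet_toSubgraph_endpoint, Set.mem_insert_iff, Set.mem_singleton_iff] at hv
    obtain ⟨p, hp, hpe, hcov⟩ : ∃ p : G.Walk v u, p.IsPath ∧ s(u, v) ∉ p.edges ∧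
        ∀ f ∈ d.edges, f ≠ s(u, v) → f ∈ p.edges := by
      rcases hv with hv | hv
      · exact of_snd hd hv
      · obtain ⟨p, hp, hpe, hcov⟩ := of_snd hd.reverse (hv.trans d.snd_reverse.symm)
        exact ⟨p, hp, hpe, fun f hf => hcov f (by simpa using hf)⟩
    exact ⟨p, hp, hpe, fun f hf => hcov f (hrot.mem_iff.mpr hf)⟩
  intro v d hd hv
  subst hv
  have hcons := d.cons_tail_eq hd.not_nil
  have htail := (Walk.cons_isCycle_iff d.tail _).mp (hcons ▸ hd)
  refine ⟨d.tail, htail.1, htail.2, fun f hf hfe => ?_⟩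
  rw [← hcons, Walk.edges_cons, List.mem_cons] at hf
  exact hf.resolve_left hfe

theorem Walk.IsPath.isAcyclic_fromEdgeSet {u v : α} {p : G.Walk u v} (hp : p.IsPath) :
    (fromEdgeSet {e | e ∈ p.edges}).IsAcyclic := by
  induction p with
  | nil => simp
  | @cons u w v h q ih =>
    rw [Walk.cons_isPath_iff] at hp
    have hnreach : ¬ (fromEdgeSet {e | e ∈ q.edges}).Reachable u w := by
      rintro ⟨r⟩
      cases r with
      | nil => exact h.ne rfl
      | cons hadj _ =>
        exact hp.2 (q.fst_mem_support_of_mem_edges ((fromEdgeSet_adj _).mp hadj).1)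
    have hset : {e | e ∈ (Walk.cons h q).edges} = {e | e ∈ q.edges} ∪ {s(u, w)} := by
      ext; simp
    rw [hset, fromEdgeSet_union]
    exact (ih hp.1).sup_edge_of_not_reachable hnreach

theorem Preconnected.reachable_deleteEdges_or {w z : α} (hG : G.Preconnected)
    (hb : G.IsBridge s(w, z)) (x : α) :
    (G.deleteEdges {s(w, z)}).Reachable x w ∨ (G.deleteEdges {s(w, z)}).Reachable x z := by
  by_contra! h
  obtain ⟨p, hp⟩ := hG.exists_isPath x w
  exact hp.isTrail.not_mem_edges_of_not_reachable h.2 hb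
    (p.mem_edges_of_not_reachable_deleteEdges h.1)

theorem Walk.IsTrail.not_reachable_deleteEdges_of_isBridge {u v w z : α} {p : G.Walk u v}
    (hp : p.IsTrail) (hê : s(w, z) ∈ p.edges) (hb : G.IsBridge s(w, z)) :
    ¬ (G.deleteEdges {s(w, z)}).Reachable u v := by
  intro huv
  by_cases huw : (G.deleteEdges {s(w, z)}).Reachable u w
  · have huz : ¬ (G.deleteEdges {s(w, z)}).Reachable u z := fun huz => hb (huw.symm.trans huz)
    exact hp.not_mem_edges_of_not_reachable huz (fun hvz => huz (huv.trans hvz)) hê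
  · rw [Sym2.eq_swap] at hê hb huv huw
    exact hp.not_mem_edges_of_not_reachable huw (fun hvw => huw (huv.trans hvw)) hê

end SimpleGraph

section Lodf

open SimpleGraph MvPolynomial

variable {α : Type*} {G : SimpleGraph α}

theorem IsTwoTreeForest.reachable {N₁ N₂ : Set α} {F : Finset (Sym2 α)}
    (hF : IsTwoTreeForest G N₁ N₂ F) {x y : α} (hx : x ∈ N₁) (hy : y ∈ N₁) :
    (fromEdgeSet (F : Set (Sym2 α))).Reachable x y := by
  obtain ⟨-, -, u, v, -, -, hN₁, -⟩ := hF
  exact (hN₁ x hx).trans (hN₁ y hy).symm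

theorem IsTwoTreeForest.not_reachable {N₁ N₂ : Set α} {F : Finset (Sym2 α)}
    (hF : IsTwoTreeForest G N₁ N₂ F) {x y : α} (hx : x ∈ N₁) (hy : y ∈ N₂) :
    ¬ (fromEdgeSet (F : Set (Sym2 α))).Reachable x y := by
  obtain ⟨-, -, u, v, huv, -, hN₁, hN₂⟩ := hF
  exact fun hxy => huv (((hN₁ x hx).symm.trans hxy).trans (hN₂ y hy))

theorem mem_twoForests [Fintype α] {N₁ N₂ : Set α} {F : Finset (Sym2 α)} :
    F ∈ twoForests G N₁ N₂ ↔ IsTwoTreeForest G N₁ N₂ F := by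
  simp [twoForests]

theorem mem_spanningTrees [Fintype α] {F : Finset (Sym2 α)} :
    F ∈ spanningTrees G ↔ IsSpanningTreeEdgeSet G F := by
  simp [spanningTrees]

theorem notMem_twoForests_swap [Fintype α] {i j w z : α} {F : Finset (Sym2 α)}
    (hF : F ∈ twoForests G {i, w} {j, z}) : F ∉ twoForests G {i, z} {j, w} := by
  rw [mem_twoForests] at hF ⊢
  intro hF'
  exact hF.not_reachable (by simp) (by simp) (hF'.reachable (x := i) (y := z) (by simp) (by simp))

theorem edgeFinset_mem_twoForests [Fintype α] {N₁ N₂ : Set α} {F : SimpleGraph α}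
    [Fintype F.edgeSet] (hFG : F ≤ G) (hF : F.IsAcyclic) {u v : α} (huv : ¬ F.Reachable u v)
    (hcover : ∀ x, F.Reachable x u ∨ F.Reachable x v) (hN₁ : ∀ x ∈ N₁, F.Reachable x u)
    (hN₂ : ∀ x ∈ N₂, F.Reachable x v) :
    F.edgeFinset ∈ twoForests G N₁ N₂ := by
  rw [mem_twoForests, IsTwoTreeForest, coe_edgeFinset, fromEdgeSet_edgeSet]
  exact ⟨edgeSet_mono hFG, hF, u, v, huv, hcover, hN₁, hN₂⟩

theorem exists_mem_twoForests_of_isPath [Fintype α] {i j w z : α}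
    (hconn : (G.deleteEdges {s(i, j)}).Connected) {p : G.Walk j i} (hp : p.IsPath)
    (hpe : s(i, j) ∉ p.edges) (hpê : s(w, z) ∈ p.edges) :
    ∃ F, F ∈ twoForests G {i, w} {j, z} ∨ F ∈ twoForests G {i, z} {j, w} := by
  classical
  have hpG : fromEdgeSet {e | e ∈ p.edges} ≤ G.deleteEdges {s(i, j)} := fun x y hxy => by
    rw [fromEdgeSet_adj] at hxy
    refine ⟨p.adj_of_mem_edges hxy.1, fun h => hpe ?_⟩
    rw [fromEdgeSet_adj, Set.mem_singleton_iff] at h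
    exact h.1 ▸ hxy.1
  obtain ⟨T, hpT, hTG, hT⟩ :=
    hconn.exists_isTree_le_of_le_of_isAcyclic hpG hp.isAcyclic_fromEdgeSet
  have hpT' : ∀ e ∈ p.edges, e ∈ T.edgeSet := fun e he =>
    edgeSet_mono hpT <| by
      rw [edgeSet_fromEdgeSet]
      exact ⟨he, G.not_isDiag_of_mem_edgeSet (p.edges_subset_edgeSet he)⟩
  have hb : T.IsBridge s(w, z) :=
    isAcyclic_iff_forall_adj_isBridge.mp hT.isAcyclic (hpT' _ hpê)
  set F := T.deleteEdges {s(w, z)}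
  have hij : ¬ F.Reachable j i :=
    (hp.transfer hpT').isTrail.not_reachable_deleteEdges_of_isBridge
      (by rwa [Walk.edges_transfer]) hb
  have hFG : F ≤ G := (deleteEdges_le _).trans (hTG.trans (deleteEdges_le _))
  have hF : F.IsAcyclic := hT.isAcyclic.anti (deleteEdges_le _)
  have hcover := hT.connected.preconnected.reachable_deleteEdges_or hb
  rcases hcover i with hiw | hiz
  · have hjz : F.Reachable j z := (hcover j).resolve_left fun hjw => hij (hjw.trans hiw.symm)
    exact ⟨_, .inl <| edgeFinset_mem_twoForests hFG hF hb hcover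
      (by simpa using hiw) (by simpa using hjz)⟩
  · have hjw : F.Reachable j w := (hcover j).resolve_right fun hjz => hij (hjz.trans hiz.symm)
    exact ⟨_, .inr <| edgeFinset_mem_twoForests hFG hF (fun h => hb h.symm)
      (fun x => (hcover x).symm) (by simpa using hiz) (by simpa using hjw)⟩

theorem spanningTrees_nonempty [Fintype α] (hG : G.Connected) : (spanningTrees G).Nonempty := by
  classical
  obtain ⟨T, hTG, hT⟩ := hG.exists_isTree_le
  refine ⟨T.edgeFinset, mem_spanningTrees.mpr ?_⟩
  rw [IsSpanningTreeEdgeSet, coe_edgeFinset, fromEdgeSet_edgeSet]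
  exact ⟨edgeSet_mono hTG, hT⟩

theorem lodf_ne_zero_of_pos [Fintype α] [DecidableEq α] {B : Sym2 α → ℝ}
    (hB : ∀ a ∈ G.edgeSet, 0 < B a) {i j w z : α}
    (hconn : (G.deleteEdges {s(i, j)}).Connected) (hê : s(w, z) ∈ G.edgeSet)
    (hnum : (∑ F ∈ twoForests G {i, w} {j, z}, chi B F) -
      ∑ F ∈ twoForests G {i, z} {j, w}, chi B F ≠ 0) :
    lodf G B i j w z ≠ 0 := by
  have hden : 0 < ∑ F ∈ spanningTrees (G.deleteEdges {s(i, j)}), chi B F := by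
    refine sum_pos (fun F hF => prod_pos fun a ha => hB a ?_) (spanningTrees_nonempty hconn)
    exact edgeSet_mono (deleteEdges_le _) ((mem_spanningTrees.mp hF).1 ha)
  exact div_ne_zero (mul_ne_zero (hB _ hê).ne' hnum) hden.ne'

theorem perturb_of_mem [Fintype α] [DecidableEq α] (B : Sym2 α → ℝ) (ω : G.edgeSet → ℝ)
    {a : Sym2 α} (ha : a ∈ G.edgeSet) : perturb G B ω a = B a + ω ⟨a, ha⟩ := by
  simp [perturb, ha]

open Classical in
noncomputable def chiPoly (G : SimpleGraph α) (B : Sym2 α → ℝ) (F : Finset (Sym2 α)) :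
    MvPolynomial G.edgeSet ℝ :=
  ∏ a ∈ F, (C (B a) + if h : a ∈ G.edgeSet then X ⟨a, h⟩ else 0)

theorem eval_chiPoly [Fintype α] [DecidableEq α] (B : Sym2 α → ℝ) (F : Finset (Sym2 α))
    (ω : G.edgeSet → ℝ) : eval ω (chiPoly G B F) = chi (perturb G B ω) F := by
  simp only [chiPoly, chi, perturb, map_prod, map_add, eval_C, apply_dite, eval_X, map_zero]
  exact prod_congr rfl fun _ _ => by congr

noncomputable def lodfNumeratorPoly [Fintype α] (G : SimpleGraph α) (B : Sym2 α → ℝ)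
    (i j w z : α) : MvPolynomial G.edgeSet ℝ :=
  ∑ F ∈ twoForests G {i, w} {j, z}, chiPoly G B F -
    ∑ F ∈ twoForests G {i, z} {j, w}, chiPoly G B F

theorem eval_lodfNumeratorPoly [Fintype α] [DecidableEq α] (B : Sym2 α → ℝ) (i j w z : α)
    (ω : G.edgeSet → ℝ) :
    eval ω (lodfNumeratorPoly G B i j w z) =
      (∑ F ∈ twoForests G {i, w} {j, z}, chi (perturb G B ω) F) -
        ∑ F ∈ twoForests G {i, z} {j, w}, chi (perturb G B ω) F := by
  simp [lodfNumeratorPoly, eval_chiPoly]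

theorem lodfNumeratorPoly_ne_zero [Fintype α] [DecidableEq α] (B : Sym2 α → ℝ) {i j w z : α}
    (h : ∃ F, F ∈ twoForests G {i, w} {j, z} ∨ F ∈ twoForests G {i, z} {j, w}) :
    lodfNumeratorPoly G B i j w z ≠ 0 := by
  classical
  obtain ⟨F₀, hF₀⟩ := Finset.exists_minimal
    (s := twoForests G {i, w} {j, z} ∪ twoForests G {i, z} {j, w})
    (let ⟨F, hF⟩ := h; ⟨F, mem_union.mpr hF⟩)
  set ω₀ : G.edgeSet → ℝ := fun a => (if (a : Sym2 α) ∈ F₀ then 1 else 0) - B a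
  have hchi : ∀ F ∈ twoForests G {i, w} {j, z} ∪ twoForests G {i, z} {j, w},
      chi (perturb G B ω₀) F = if F = F₀ then 1 else 0 := by
    intro F hF
    have hFG : ↑F ⊆ G.edgeSet := by
      rcases mem_union.mp hF with hF | hF <;> exact (mem_twoForests.mp hF).1
    have hsub : F ⊆ F₀ ↔ F = F₀ := ⟨hF₀.eq_of_le hF, fun h => h.le⟩
    calc chi (perturb G B ω₀) F = ∏ a ∈ F, if a ∈ F₀ then 1 else 0 :=
          prod_congr rfl fun a ha => by simp [perturb_of_mem B ω₀ (hFG ha), ω₀]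
      _ = if F = F₀ then 1 else 0 := by simp_rw [prod_boole, ← subset_iff, hsub]
  intro hN
  have := congrArg (eval ω₀) hN
  rw [eval_lodfNumeratorPoly, map_zero, sum_congr rfl fun F hF => hchi F (mem_union_left _ hF),
    sum_congr rfl fun F hF => hchi F (mem_union_right _ hF), sum_ite_eq', sum_ite_eq'] at this
  rcases mem_union.mp hF₀.1 with hA | hA <;> simp [hA, notMem_twoForests_swap hA] at this

end Lodf

open MeasureTheory in
theorem lodf_ne_zero_almost_surely_general (G : SimpleGraph V) (hG : G.Connected)
    [Fintype ↥G.edgeSet]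
    (i j w z : V) (hne : s(i, j) ≠ s(w, z))
    (hcell : ∃ (v : V) (c : G.Walk v v), c.IsCycle ∧
      s(i, j) ∈ c.edges ∧ s(w, z) ∈ c.edges)
    (B : Sym2 V → ℝ)
    (μ : Measure (↥G.edgeSet → ℝ)) [IsProbabilityMeasure μ]
    (hac : μ ≪ volume)
    (hpos : ∀ᵐ ω ∂μ, ∀ a : ↥G.edgeSet, 0 < B (a : Sym2 V) + ω a) :
    μ {ω : ↥G.edgeSet → ℝ | lodf G (perturb G B ω) i j w z ≠ 0} = 1 := by
  obtain ⟨v, c, hc, he, hê⟩ := hcell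
  have hconn : (G.deleteEdges {s(i, j)}).Connected :=
    hG.connected_delete_edge_of_not_isBridge fun hb => hb.notMem_edges_of_isCycle hc he
  obtain ⟨p, hp, hpe, hpcov⟩ := hc.exists_isPath_of_mem_edges he
  have hN := lodfNumeratorPoly_ne_zero B
    (exists_mem_twoForests_of_isPath hconn hp hpe (hpcov _ hê hne.symm))
  have hae : ∀ᵐ ω ∂μ, lodf G (perturb G B ω) i j w z ≠ 0 := by
    filter_upwards [hpos, hac.ae_le (MvPolynomial.ae_eval_ne_zero hN)] with ω hω hNω
    refine lodf_ne_zero_of_pos (fun a ha => ?_) hconn (c.edges_subset_edgeSet hê) ?_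
    · rw [perturb_of_mem B ω ha]
      exact hω ⟨a, ha⟩
    · rwa [eval_lodfNumeratorPoly] at hNω
  rw [measure_congr (ae_eq_univ.mpr hae), measure_univ]

open MeasureTheory in
/-- Let `e = (i, j)` and `ê = (w, z)` be distinct edges of a finite
simple connected graph `G` lying in a common cell, i.e. on a common cycle. For any
`B : ℝ^E` and any probability measure `μ` on `ℝ^E` that is absolutely continuous with
respect to the Lebesgue measure and under which almost surely `B_a + ω_a > 0` for every
edge `a`, the line outage distribution factor computed with susceptances `B + ω` is
nonzero `μ`-almost surely: `μ{ω : K_{e ê}(B + ω) ≠ 0} = 1`. -/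
theorem lodf_ne_zero_almost_surely (G : SimpleGraph V) (hG : G.Connected)
    [Fintype ↥G.edgeSet]
    (i j w z : V) (hij : G.Adj i j) (hwz : G.Adj w z) (hne : s(i, j) ≠ s(w, z))
    (hcell : ∃ (v : V) (c : G.Walk v v), c.IsCycle ∧
      s(i, j) ∈ c.edges ∧ s(w, z) ∈ c.edges)
    (B : Sym2 V → ℝ)
    (μ : Measure (↥G.edgeSet → ℝ)) [IsProbabilityMeasure μ]
    (hac : μ ≪ volume)
    (hpos : ∀ᵐ ω ∂μ, ∀ a : ↥G.edgeSet, 0 < B (a : Sym2 V) + ω a) :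
    μ {ω : ↥G.edgeSet → ℝ | lodf G (perturb G B ω) i j w z ≠ 0} = 1 :=
  lodf_ne_zero_almost_surely_general G hG i j w z hne hcell B μ hac hpos
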